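/- Let g = l ⊕ rad(g) be a graded transvective symplectic Lie algebra of rank-one type with l ≅ sl(2,ℂ), and let a ⊂ rad(g) be an ad_l-invariant complement of z(g) in the preimage of z(rad(g)/z(g)). Suppose a contains a nonzero element a₀ with [a₀, l] = 0. Then a₀ ∈ z(g) ∩ a = 0, a contradiction; i.e., a contains no nonzero ad_l-invariant element. -/
import Mathlib

/-- In the situation of Proposition 4.1 (`g` complex with Levi decomposition
`g = l ⊕ rad(g)`, graded of rank-one type, transvective symmetric decomposition
`k = g^{even}`, `p = g^{odd}`, and `a ⊆ rad(g)` an `ad_l`-invariant complement of the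
center with `[a, rad(g)] ⊆ z(g)`, `a ∩ z(g) = 0`, `p ∩ z(g) = 0`), the subspace `a`
contains no nonzero `ad_l`-invariant element: if `a₀ ∈ a` satisfies `[a₀, l] = 0`
then `a₀ = 0`. -/
theorem no_invariant_elements_in_a
    (g : Type*) [LieRing g] [LieAlgebra ℂ g] [FiniteDimensional ℂ g]
    (k p : Submodule ℂ g)
    (hkp : ∀ x ∈ k, ∀ y ∈ p, ⁅x, y⁆ ∈ p)
    -- `p` generates `g` as a Lie algebra (transvectivity):
    (hgen : LieSubalgebra.lieSpan ℂ g (p : Set g) = ⊤)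
    -- the Levi subalgebra `l`, containing the grading element `e₀`:
    (l : LieSubalgebra ℂ g) (e₀ : g) (he₀ : e₀ ∈ l)
    -- the centralizer of `e₀` is contained in `g₀ ⊆ k`:
    (he₀cent : ∀ x : g, ⁅e₀, x⁆ = 0 → x ∈ k)
    -- `p = (p ∩ l) ⊕ (p ∩ rad)`:
    (hpl : p ≤ (p ⊓ l.toSubmodule) ⊔ (p ⊓ (LieAlgebra.radical ℂ g).toSubmodule))
    -- `p ∩ z(g) = 0`:
    (hzp : (LieAlgebra.center ℂ g).toSubmodule ⊓ p = ⊥)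
    -- the subspace `a`:
    (a : Submodule ℂ g)
    (ha_rad : a ≤ (LieAlgebra.radical ℂ g).toSubmodule)
    (ha_z : a ⊓ (LieAlgebra.center ℂ g).toSubmodule = ⊥)
    (ha_br : ∀ x ∈ a, ∀ y ∈ LieAlgebra.radical ℂ g, ⁅x, y⁆ ∈ LieAlgebra.center ℂ g) :
    ∀ a₀ ∈ a, (∀ y ∈ l, ⁅a₀, y⁆ = 0) → a₀ = 0 := by
  intro a₀ ha₀ hcomm
  -- a₀ ∈ k since it commutes with e₀
  have hk : a₀ ∈ k := by
    apply he₀cent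
    have := hcomm e₀ he₀
    rw [← lie_skew, this, neg_zero]
  -- a₀ commutes with every element of p
  have hp : ∀ y ∈ p, ⁅a₀, y⁆ = 0 := by
    intro y hy
    obtain ⟨yl, hyl, yr, hyr, rfl⟩ := Submodule.mem_sup.mp (hpl hy)
    have h1 : ⁅a₀, yl⁆ = 0 := hcomm yl hyl.2
    have h2 : ⁅a₀, yr⁆ = 0 := by
      have hz : ⁅a₀, yr⁆ ∈ LieAlgebra.center ℂ g := ha_br a₀ ha₀ yr hyr.2
      have hpp : ⁅a₀, yr⁆ ∈ p := hkp a₀ hk yr hyr.1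
      have : ⁅a₀, yr⁆ ∈ (LieAlgebra.center ℂ g).toSubmodule ⊓ p := ⟨hz, hpp⟩
      rw [hzp] at this
      exact this
    rw [lie_add, h1, h2, add_zero]
  -- the centralizer of a₀ is a Lie subalgebra
  let S : LieSubalgebra ℂ g :=
    { carrier := {y | ⁅a₀, y⁆ = 0}
      add_mem' := fun {x y} hx hy => by
        simp only [Set.mem_setOf_eq] at *; rw [lie_add, hx, hy, add_zero]
      zero_mem' := by simp
      smul_mem' := fun c x hx => by
        simp only [Set.mem_setOf_eq] at *; rw [lie_smul, hx, smul_zero]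
      lie_mem' := fun {x y} hx hy => by
        simp only [Set.mem_setOf_eq] at *
        rw [leibniz_lie, hx, hy, zero_lie, lie_zero, add_zero] }
  have hS : ∀ y : g, ⁅a₀, y⁆ = 0 := by
    intro y
    have : y ∈ S := by
      have hle : LieSubalgebra.lieSpan ℂ g (p : Set g) ≤ S :=
        LieSubalgebra.lieSpan_le.mpr (fun x hx => hp x hx)
      rw [hgen] at hle
      exact hle trivial
    exact this
  -- hence a₀ ∈ center
  have hcen : a₀ ∈ LieAlgebra.center ℂ g := by
    rw [LieModule.mem_maxTrivSubmodule]
    intro x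
    rw [← lie_skew, hS, neg_zero]
  have : a₀ ∈ a ⊓ (LieAlgebra.center ℂ g).toSubmodule := ⟨ha₀, hcen⟩
  rw [ha_z] at this
  exact this
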